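/- Let AS₁ and AS₂ be syntactically disjoint argumentation systems with union AS₊, and suppose a ∈ 𝒜_i attacks b ∈ 𝒜_j (i ≠ j) in the JSBAF of AS₊. Then there exists a strict argument c of the form c : → φ (via a consequence-based rule from the empty set) belonging to 𝒜_i ∩ 𝒜_j ∩ 𝒜₊ that attacks a in the JSBAF of AS_i or attacks b in the JSBAF of AS_j. -/

import Mathlib

namespace ASPIC

/-- An underlying logical language: formulas, atoms, interpretations, a classical
negation and conjunction, and the interpolation-style assumption on syntactically
disjoint sets of formulas. -/
structure Logic where
  F : Type
  Atom : Type
  atoms : F → Set Atom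
  I : Type
  inhab : Nonempty I
  Models : I → F → Prop
  neg : F → F
  conj : F → F → F
  neg_spec : ∀ i φ, Models i (neg φ) ↔ ¬ Models i φ
  conj_spec : ∀ i φ ψ, Models i (conj φ ψ) ↔ (Models i φ ∧ Models i ψ)
  atoms_neg : ∀ φ, atoms (neg φ) = atoms φ
  atoms_conj : ∀ φ ψ, atoms (conj φ ψ) = atoms φ ∪ atoms ψ
  interp : ∀ Γ Δ : Set F, (∀ φ ∈ Γ, ∀ ψ ∈ Δ, atoms φ ∩ atoms ψ = ∅) →
    (∃ i, ∀ φ ∈ Γ, Models i φ) → (∃ i, ∀ ψ ∈ Δ, Models i ψ) →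
    (∃ i, (∀ φ ∈ Γ, Models i φ) ∧ (∀ ψ ∈ Δ, Models i ψ))

/-- The model-based consequence relation ⊨_C. -/
def Conseq (L : Logic) (Γ : Set L.F) (φ : L.F) : Prop :=
  ∀ i, (∀ ψ ∈ Γ, L.Models i ψ) → L.Models i φ

/-- φ = −ψ: one formula is the negation of the other. -/
def negOf (L : Logic) (φ ψ : L.F) : Prop := φ = L.neg ψ ∨ ψ = L.neg φ

/-- Conjunction of a nonempty list of formulas: conjL L φ [ψ₁,…] = φ ∧ ψ₁ ∧ … . -/
def conjL (L : Logic) : L.F → List L.F → L.F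
  | φ, [] => φ
  | φ, ψ :: l => L.conj φ (conjL L ψ l)

/-- A (defeasible) rule: antecedents and conclusion. -/
abbrev Rule (L : Logic) := List L.F × L.F

/-- An argumentation system of Deductive ASPIC⊖: satisfiable axioms, defeasible rules,
a (partial) naming function and a total preorder on defeasible rules.  The strict rules
are the axiomatic rules together with all consequence-based rules. -/
structure ASys (L : Logic) where
  AX : Set L.F
  AX_sat : ∃ i, ∀ φ ∈ AX, L.Models i φ
  Rd : Set (Rule L)
  name : Rule L → Option L.F
  rpref : Rule L → Rule L → Prop
  rpref_refl : ∀ r, rpref r r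
  rpref_trans : ∀ r s t, rpref r s → rpref s t → rpref r t
  rpref_total : ∀ r s, rpref r s ∨ rpref s r

/-- Top-rule kinds: axiomatic, consequence-based strict, defeasible. -/
inductive RK : Type
  | ax | cb | df
deriving DecidableEq

/-- Argument trees (with the kind of the top rule and the conclusion recorded). -/
inductive Arg (L : Logic) : Type
  | node (k : RK) (subs : List (Arg L)) (concl : L.F)

def Arg.concl {L : Logic} : Arg L → L.F
  | .node _ _ φ => φ

def Arg.subs {L : Logic} : Arg L → List (Arg L)
  | .node _ s _ => s

def Arg.kind {L : Logic} : Arg L → RK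
  | .node k _ _ => k

/-- Well-formed arguments of an argumentation system. -/
inductive Wf (L : Logic) (as : ASys L) : Arg L → Prop
  | ax (φ : L.F) (h : φ ∈ as.AX) : Wf L as (.node .ax [] φ)
  | cb (subs : List (Arg L)) (φ : L.F) (hs : ∀ a ∈ subs, Wf L as a)
      (h : Conseq L {ψ | ∃ a ∈ subs, Arg.concl a = ψ} φ) : Wf L as (.node .cb subs φ)
  | df (subs : List (Arg L)) (φ : L.F) (hs : ∀ a ∈ subs, Wf L as a)
      (h : (subs.map Arg.concl, φ) ∈ as.Rd) : Wf L as (.node .df subs φ)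

/-- Sub-argument relation: `Sub a b` means a is a sub-argument of b. -/
inductive Sub (L : Logic) : Arg L → Arg L → Prop
  | refl (a : Arg L) : Sub L a a
  | step (a b : Arg L) (k : RK) (subs : List (Arg L)) (φ : L.F)
      (hb : b ∈ subs) (h : Sub L a b) : Sub L a (.node k subs φ)

/-- Conclusions of the sub-arguments of a. -/
def SubC (L : Logic) (a : Arg L) : Set L.F := {φ | ∃ b, Sub L b a ∧ Arg.concl b = φ}

/-- Axiomatic and defeasible sub-arguments. -/
def ADSub (L : Logic) (a : Arg L) : Set (Arg L) := {b | Sub L b a ∧ Arg.kind b ≠ RK.cb}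

/-- Conclusions of the axiomatic and defeasible sub-arguments. -/
def ADSubC (L : Logic) (a : Arg L) : Set L.F :=
  {φ | ∃ b, Sub L b a ∧ Arg.kind b ≠ RK.cb ∧ Arg.concl b = φ}

/-- Defeasible rules used in an argument. -/
def DR (L : Logic) (a : Arg L) : Set (Rule L) :=
  {r | ∃ subs, Sub L (Arg.node RK.df subs r.2) a ∧ r.1 = subs.map Arg.concl}

/-- Strict arguments: no defeasible rules used. -/
def IsStrictArg (L : Logic) (a : Arg L) : Prop := DR L a = ∅

/-- Elitist weakest-link lifting of the rule preorder to arguments (a ⪯_ewl b). -/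
def ewl (L : Logic) (as : ASys L) (a b : Arg L) : Prop :=
  (DR L a = ∅ ∧ DR L b = ∅) ∨ ∃ ra ∈ DR L a, ∀ rb ∈ DR L b, as.rpref ra rb

/-- a undercuts b: the conclusion of a is the negation of the name of a defeasible rule
used in b. -/
def Undercuts (L : Logic) (as : ASys L) (a b : Arg L) : Prop :=
  ∃ subs φ, Sub L (Arg.node RK.df subs φ) b ∧
    ∃ nm, as.name (subs.map Arg.concl, φ) = some nm ∧ negOf L (Arg.concl a) nm

/-- a gen-rebuts b: b is defeasible and the conclusion of a is the negation of a conjunction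
of conclusions of sub-arguments of b. -/
def GenRebuts (L : Logic) (a b : Arg L) : Prop :=
  DR L b ≠ ∅ ∧ ∃ (φ : L.F) (l : List L.F),
    (∀ χ ∈ φ :: l, χ ∈ SubC L b) ∧ Arg.concl a = L.neg (conjL L φ l)

/-- a defeats b: a undercuts b, or a gen-rebuts b and a is not strictly weaker than b. -/
def Defeats (L : Logic) (as : ASys L) (a b : Arg L) : Prop :=
  Undercuts L as a b ∨
    (GenRebuts L a b ∧ ¬ (ewl L as a b ∧ ¬ ewl L as b a))

/-- The strict rules of an argumentation system: axiomatic or consequence-based. -/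
def StrictRule (L : Logic) (as : ASys L) (r : Rule L) : Prop :=
  (r.1 = [] ∧ r.2 ∈ as.AX) ∨ Conseq L {φ | φ ∈ r.1} r.2

end ASPIC

namespace ASPIC

/-- Atoms occurring in a rule. -/
def ruleAtoms (L : Logic) (r : Rule L) : Set L.Atom :=
  (⋃ φ ∈ r.1, L.atoms φ) ∪ L.atoms r.2

/-- Atoms of an argumentation system: atoms of its axioms, of its defeasible rules and of the
names of its defeasible rules. -/
def atomsOf (L : Logic) (as : ASys L) : Set L.Atom :=
  (⋃ φ ∈ as.AX, L.atoms φ) ∪ (⋃ r ∈ as.Rd, ruleAtoms L r) ∪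
    (⋃ r ∈ as.Rd, (as.name r).elim ∅ L.atoms)

/-- Syntactic disjointness of two argumentation systems. -/
def SynDisj (L : Logic) (as₁ as₂ : ASys L) : Prop :=
  atomsOf L as₁ ∩ atomsOf L as₂ = ∅

/-- asp is a union of as₁ and as₂. -/
structure IsUnion (L : Logic) (as₁ as₂ asp : ASys L) : Prop where
  ax : asp.AX = as₁.AX ∪ as₂.AX
  rd : asp.Rd = as₁.Rd ∪ as₂.Rd
  nm₁ : ∀ r ∈ as₁.Rd, asp.name r = as₁.name r
  nm₂ : ∀ r ∈ as₂.Rd, asp.name r = as₂.name r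
  rp₁ : ∀ r s, as₁.rpref r s → asp.rpref r s
  rp₂ : ∀ r s, as₂.rpref r s → asp.rpref r s

/-- A consistent argument: every subset of the conclusions of its sub-arguments is
satisfiable. -/
def ConsArg (L : Logic) (a : Arg L) : Prop :=
  ∀ Γ : Set L.F, Γ ⊆ SubC L a → ∃ i, ∀ φ ∈ Γ, L.Models i φ

/-- A tautology: satisfied by every interpretation. -/
def Taut (L : Logic) (φ : L.F) : Prop := ∀ i, L.Models i φ

end ASPIC

/-!
If the axiomatic and defeasible premises `ADSubC` of `a` (or of `b`) are unsatisfiable, a finite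
unsatisfiable subset `{φ₁, …, φₙ}` makes `¬(φ₁ ∧ … ∧ φₙ)` a tautology, and the premise-free strict
argument for it gen-rebuts, hence defeats, that argument. Otherwise both premise sets are
satisfiable and, being written over disjoint atoms, have a common model, which satisfies every
sub-conclusion of `a` and of `b`, so `a` cannot gen-rebut `b`. If `a` undercuts `b` via the name
`nm` of a rule of `AS₂`, the same argument applied to the premises of `a` and `{nm}` shows that
`nm` is unsatisfiable, so `→ ¬nm` undercuts `b` already in `AS₂`.
-/

namespace ASPIC

variable {L : Logic}

def Satisfiable (L : Logic) (Γ : Set L.F) : Prop := ∃ i, ∀ φ ∈ Γ, L.Models i φ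

theorem Satisfiable.subset {Γ Δ : Set L.F} (h : Satisfiable L Δ) (hΓ : Γ ⊆ Δ) :
    Satisfiable L Γ :=
  let ⟨i, hi⟩ := h
  ⟨i, fun φ hφ => hi φ (hΓ hφ)⟩

theorem conseq_of_mem {Γ : Set L.F} {φ : L.F} (h : φ ∈ Γ) : Conseq L Γ φ :=
  fun _ hi => hi φ h

theorem Conseq.mono {Γ Δ : Set L.F} {φ : L.F} (h : Conseq L Γ φ) (hΓ : Γ ⊆ Δ) : Conseq L Δ φ :=
  fun i hi => h i fun ψ hψ => hi ψ (hΓ hψ)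

theorem Conseq.trans {Γ Δ : Set L.F} {φ : L.F} (h : Conseq L Γ φ)
    (hΓ : ∀ ψ ∈ Γ, Conseq L Δ ψ) : Conseq L Δ φ :=
  fun i hi => h i fun ψ hψ => hΓ ψ hψ i hi

theorem Taut.wf_cb_nil {as : ASys L} {φ : L.F} (h : Taut L φ) : Wf L as (.node .cb [] φ) :=
  .cb [] φ (by simp) fun i _ => h i

theorem negOf.not_models {φ ψ : L.F} (h : negOf L φ ψ) {i : L.I} (hφ : L.Models i φ) :
    ¬ L.Models i ψ := by
  rcases h with rfl | rfl
  · exact (L.neg_spec i ψ).mp hφ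
  · exact fun hψ => (L.neg_spec i φ).mp hψ hφ

theorem models_conjL {i : L.I} {φ : L.F} {l : List L.F} :
    L.Models i (conjL L φ l) ↔ ∀ χ ∈ φ :: l, L.Models i χ := by
  induction l generalizing φ with
  | nil => simp [conjL]
  | cons ψ l ih => simp [conjL, L.conj_spec, ih]

theorem exists_taut_neg_conjL_of_not_satisfiable {Γ : Set L.F} (hfin : Γ.Finite)
    (h : ¬ Satisfiable L Γ) :
    ∃ φ l, (∀ χ ∈ φ :: l, χ ∈ Γ) ∧ Taut L (L.neg (conjL L φ l)) := by
  obtain ⟨s, rfl⟩ := hfin.exists_finset_coe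
  have hmem : ∀ χ, χ ∈ s.toList ↔ χ ∈ (s : Set L.F) := by simp
  rcases hl : s.toList with _ | ⟨φ, l⟩
  · obtain ⟨i⟩ := L.inhab
    exact absurd ⟨i, fun χ hχ => by simp [← hmem, hl] at hχ⟩ h
  · rw [hl] at hmem
    refine ⟨φ, l, fun χ hχ => (hmem χ).mp hχ, fun i => (L.neg_spec _ _).mpr fun hi => ?_⟩
    exact h ⟨i, fun χ hχ => models_conjL.mp hi χ ((hmem χ).mpr hχ)⟩

theorem Sub.trans {a b c : Arg L} (hab : Sub L a b) (hbc : Sub L b c) : Sub L a c := by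
  induction hbc with
  | refl => exact hab
  | step _ _ _ _ hb _ ih => exact .step _ _ _ _ _ hb ih

theorem sub_node_iff {c : Arg L} {k : RK} {subs : List (Arg L)} {φ : L.F} :
    Sub L c (.node k subs φ) ↔ c = .node k subs φ ∨ ∃ b ∈ subs, Sub L c b := by
  constructor
  · intro h
    cases h with
    | refl => exact .inl rfl
    | step b _ _ _ hb h => exact .inr ⟨b, hb, h⟩
  · rintro (rfl | ⟨b, hb, h⟩)
    · exact .refl _
    · exact .step _ _ _ _ _ hb h

theorem concl_mem_SubC (a : Arg L) : Arg.concl a ∈ SubC L a := ⟨a, .refl a, rfl⟩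

theorem mem_SubC_node {k : RK} {subs : List (Arg L)} {φ ψ : L.F} :
    ψ ∈ SubC L (.node k subs φ) ↔ ψ = φ ∨ ∃ b ∈ subs, ψ ∈ SubC L b := by
  simp only [SubC, Set.mem_ofPred_eq, sub_node_iff]
  constructor
  · rintro ⟨c, rfl | ⟨b, hb, hc⟩, rfl⟩
    exacts [.inl rfl, .inr ⟨b, hb, c, hc, rfl⟩]
  · rintro (rfl | ⟨b, hb, c, hc, rfl⟩)
    exacts [⟨_, .inl rfl, rfl⟩, ⟨c, .inr ⟨b, hb, hc⟩, rfl⟩]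

theorem ADSubC_subset_SubC (a : Arg L) : ADSubC L a ⊆ SubC L a :=
  fun _ ⟨c, hc, _, he⟩ => ⟨c, hc, he⟩

theorem ADSubC_mono {a b : Arg L} (h : Sub L b a) : ADSubC L b ⊆ ADSubC L a :=
  fun _ ⟨c, hc, hk, he⟩ => ⟨c, hc.trans h, hk, he⟩

theorem ADSubC_node_subset (k : RK) (subs : List (Arg L)) (φ : L.F) :
    ADSubC L (.node k subs φ) ⊆ insert φ (⋃ b ∈ {b | b ∈ subs}, ADSubC L b) := by
  rintro _ ⟨c, hc, hk, rfl⟩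
  rcases sub_node_iff.mp hc with rfl | ⟨b, hb, hcb⟩
  · exact .inl rfl
  · exact .inr (Set.mem_biUnion hb ⟨c, hcb, hk, rfl⟩)

theorem ADSubC_finite : ∀ a : Arg L, (ADSubC L a).Finite
  | .node k subs φ =>
    have hsubs (b : Arg L) (hb : b ∈ subs) : (ADSubC L b).Finite :=
      have := List.sizeOf_lt_of_mem hb
      ADSubC_finite b
    ((subs.finite_toSet.biUnion hsubs).insert φ).subset (ADSubC_node_subset k subs φ)

theorem DR_cb_nil (φ : L.F) : DR L (.node .cb [] φ) = ∅ := by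
  ext r
  simp only [DR, Set.mem_ofPred_eq, Set.mem_empty_iff_false, iff_false, not_exists, sub_node_iff]
  rintro subs ⟨h | ⟨b, hb, -⟩, -⟩
  · cases h
  · simp at hb

section Wf

variable {as : ASys L}

theorem Wf.of_sub {a b : Arg L} (hw : Wf L as a) (h : Sub L b a) : Wf L as b := by
  induction h with
  | refl => exact hw
  | step _ _ _ _ hb _ ih =>
    cases hw with
    | ax => simp at hb
    | cb _ _ hs => exact ih (hs _ hb)
    | df _ _ hs => exact ih (hs _ hb)

theorem Wf.df_mem_Rd {subs : List (Arg L)} {φ : L.F} (hw : Wf L as (.node .df subs φ)) :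
    (subs.map Arg.concl, φ) ∈ as.Rd := by
  cases hw
  assumption

theorem conseq_of_mem_SubC_node {k : RK} {subs : List (Arg L)} {φ ψ : L.F}
    (hsubs : ∀ b ∈ subs, ∀ χ ∈ SubC L b, Conseq L (ADSubC L b) χ)
    (htop : Conseq L (ADSubC L (.node k subs φ)) φ) (hψ : ψ ∈ SubC L (.node k subs φ)) :
    Conseq L (ADSubC L (.node k subs φ)) ψ := by
  rcases mem_SubC_node.mp hψ with rfl | ⟨b, hb, hψ⟩
  · exact htop
  · exact (hsubs b hb ψ hψ).mono (ADSubC_mono (.step _ _ _ _ _ hb (.refl b)))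

theorem Wf.conseq_of_mem_SubC {a : Arg L} (hw : Wf L as a) {ψ : L.F} (hψ : ψ ∈ SubC L a) :
    Conseq L (ADSubC L a) ψ := by
  induction hw generalizing ψ with
  | ax φ _ =>
    exact conseq_of_mem_SubC_node (by simp) (conseq_of_mem ⟨_, .refl _, nofun, rfl⟩) hψ
  | cb subs φ _ h ih =>
    refine conseq_of_mem_SubC_node ih (h.trans ?_) hψ
    rintro _ ⟨b, hb, rfl⟩
    exact (ih b hb (concl_mem_SubC b)).mono (ADSubC_mono (.step _ _ _ _ _ hb (.refl b)))
  | df subs φ _ _ ih =>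
    exact conseq_of_mem_SubC_node ih (conseq_of_mem ⟨_, .refl _, nofun, rfl⟩) hψ

theorem Wf.atoms_subset_of_mem_ADSubC {a : Arg L} (hw : Wf L as a) {φ : L.F}
    (hφ : φ ∈ ADSubC L a) : L.atoms φ ⊆ atomsOf L as := by
  obtain ⟨b, hb, hk, rfl⟩ := hφ
  cases hw.of_sub hb with
  | ax _ h => exact fun _ hx => .inl (.inl (Set.mem_biUnion h hx))
  | cb => exact absurd rfl hk
  | df _ _ _ h => exact fun _ hx => .inl (.inr (Set.mem_biUnion h (.inr hx)))

theorem atoms_name_subset {r : Rule L} {nm : L.F} (hr : r ∈ as.Rd) (hn : as.name r = some nm) :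
    L.atoms nm ⊆ atomsOf L as :=
  fun _ hx => .inr (Set.mem_biUnion hr (by rw [hn]; exact hx))

theorem Wf.ADSubC_subset_AX {a : Arg L} (hw : Wf L as a) (hdr : DR L a = ∅) :
    ADSubC L a ⊆ as.AX := by
  rintro _ ⟨b, hb, hk, rfl⟩
  cases hw.of_sub hb with
  | ax _ h => exact h
  | cb => exact absurd rfl hk
  | df subs ψ =>
    have : (subs.map Arg.concl, ψ) ∈ DR L a := ⟨subs, hb, rfl⟩
    simp [hdr] at this

theorem defeats_of_genRebuts {c a : Arg L} (hc : DR L c = ∅) (h : GenRebuts L c a) :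
    Defeats L as c a := by
  refine .inr ⟨h, fun ⟨_, hnot⟩ => hnot (.inr ?_)⟩
  obtain ⟨r, hr⟩ := Set.nonempty_iff_ne_empty.mpr h.1
  exact ⟨r, hr, by simp [hc]⟩

theorem Wf.exists_taut_genRebuts {a : Arg L} (hw : Wf L as a)
    (h : ¬ Satisfiable L (ADSubC L a)) :
    ∃ φ, Taut L φ ∧ GenRebuts L (.node .cb [] φ) a := by
  obtain ⟨φ, l, hmem, htaut⟩ := exists_taut_neg_conjL_of_not_satisfiable (ADSubC_finite a) h
  exact ⟨_, htaut, fun hdr => h (Satisfiable.subset as.AX_sat (hw.ADSubC_subset_AX hdr)),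
    φ, l, fun χ hχ => ADSubC_subset_SubC a (hmem χ hχ), rfl⟩

end Wf

theorem Undercuts.of_isUnion_right {as₁ as₂ asp : ASys L} (hU : IsUnion L as₁ as₂ asp)
    {a b : Arg L} (hb : Wf L as₂ b) (h : Undercuts L asp a b) : Undercuts L as₂ a b := by
  obtain ⟨subs, ψ, hsub, nm, hname, hneg⟩ := h
  exact ⟨subs, ψ, hsub, nm, hU.nm₂ _ (hb.of_sub hsub).df_mem_Rd ▸ hname, hneg⟩

section SynDisj

variable {as₁ as₂ : ASys L} {a b : Arg L}

theorem SynDisj.satisfiable_union (hdisj : SynDisj L as₁ as₂) {Γ Δ : Set L.F}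
    (hΓ : ∀ φ ∈ Γ, L.atoms φ ⊆ atomsOf L as₁) (hΔ : ∀ ψ ∈ Δ, L.atoms ψ ⊆ atomsOf L as₂)
    (h₁ : Satisfiable L Γ) (h₂ : Satisfiable L Δ) : Satisfiable L (Γ ∪ Δ) := by
  obtain ⟨i, hiΓ, hiΔ⟩ := L.interp Γ Δ
    (fun φ hφ ψ hψ => Set.subset_eq_empty (Set.inter_subset_inter (hΓ φ hφ) (hΔ ψ hψ)) hdisj)
    h₁ h₂
  exact ⟨i, fun φ hφ => hφ.elim (hiΓ φ) (hiΔ φ)⟩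

theorem SynDisj.not_genRebuts (hdisj : SynDisj L as₁ as₂) (ha : Wf L as₁ a) (hb : Wf L as₂ b)
    (hsa : Satisfiable L (ADSubC L a)) (hsb : Satisfiable L (ADSubC L b)) :
    ¬ GenRebuts L a b := by
  rintro ⟨-, φ, l, hmem, hconcl⟩
  obtain ⟨i, hi⟩ := hdisj.satisfiable_union (fun _ => ha.atoms_subset_of_mem_ADSubC)
    (fun _ => hb.atoms_subset_of_mem_ADSubC) hsa hsb
  have hia := ha.conseq_of_mem_SubC (concl_mem_SubC a) i fun χ hχ => hi χ (.inl hχ)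
  rw [hconcl, L.neg_spec, models_conjL] at hia
  exact hia fun χ hχ => hb.conseq_of_mem_SubC (hmem χ hχ) i fun χ hχ => hi χ (.inr hχ)

theorem SynDisj.exists_taut_undercuts (hdisj : SynDisj L as₁ as₂) (ha : Wf L as₁ a)
    (hb : Wf L as₂ b) (hsa : Satisfiable L (ADSubC L a)) (h : Undercuts L as₂ a b) :
    ∃ φ, Taut L φ ∧ Undercuts L as₂ (.node .cb [] φ) b := by
  obtain ⟨subs, ψ, hsub, nm, hname, hneg⟩ := h
  have hnm : ¬ Satisfiable L {nm} := by
    intro hnm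
    obtain ⟨i, hi⟩ := hdisj.satisfiable_union (fun _ => ha.atoms_subset_of_mem_ADSubC)
      (by rintro _ rfl; exact atoms_name_subset (hb.of_sub hsub).df_mem_Rd hname) hsa hnm
    exact hneg.not_models (ha.conseq_of_mem_SubC (concl_mem_SubC a) i fun χ hχ => hi χ (.inl hχ))
      (hi nm (.inr rfl))
  exact ⟨L.neg nm, fun i => (L.neg_spec i nm).mpr fun h => hnm ⟨i, by simpa using h⟩,
    subs, ψ, hsub, nm, hname, .inl rfl⟩

end SynDisj

end ASPIC

open ASPIC in
/-- If a ∈ 𝒜₁ attacks b ∈ 𝒜₂ in the JSBAF of the union AS₊ of two syntactically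
disjoint argumentation systems, then there exists a strict argument c : → φ (a consequence-based
rule with no antecedents), well formed in AS₁, AS₂ and AS₊, which defeats a in AS₁ or defeats b
in AS₂. -/
theorem cross_attack_strict_counterattack (L : Logic) (as₁ as₂ asp : ASys L)
    (hdisj : SynDisj L as₁ as₂) (hU : IsUnion L as₁ as₂ asp)
    (a b : Arg L) (ha : Wf L as₁ a) (hb : Wf L as₂ b)
    (hatt : Defeats L asp a b) :
    ∃ φ : L.F,
      Wf L as₁ (Arg.node RK.cb [] φ) ∧
      Wf L as₂ (Arg.node RK.cb [] φ) ∧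
      Wf L asp (Arg.node RK.cb [] φ) ∧
      (Defeats L as₁ (Arg.node RK.cb [] φ) a ∨ Defeats L as₂ (Arg.node RK.cb [] φ) b) := by
  suffices ∃ φ, Taut L φ ∧
      (Defeats L as₁ (.node .cb [] φ) a ∨ Defeats L as₂ (.node .cb [] φ) b) by
    obtain ⟨φ, hφ, hdef⟩ := this
    exact ⟨φ, hφ.wf_cb_nil, hφ.wf_cb_nil, hφ.wf_cb_nil, hdef⟩
  by_cases hsa : Satisfiable L (ADSubC L a)
  swap
  · obtain ⟨φ, hφ, hreb⟩ := ha.exists_taut_genRebuts hsa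
    exact ⟨φ, hφ, .inl (defeats_of_genRebuts (DR_cb_nil φ) hreb)⟩
  by_cases hsb : Satisfiable L (ADSubC L b)
  swap
  · obtain ⟨φ, hφ, hreb⟩ := hb.exists_taut_genRebuts hsb
    exact ⟨φ, hφ, .inr (defeats_of_genRebuts (DR_cb_nil φ) hreb)⟩
  rcases hatt with hund | ⟨hreb, -⟩
  · obtain ⟨φ, hφ, hund₂⟩ := hdisj.exists_taut_undercuts ha hb hsa (hund.of_isUnion_right hU hb)
    exact ⟨φ, hφ, .inr (.inl hund₂)⟩
  · exact absurd hreb (hdisj.not_genRebuts ha hb hsa hsb)
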